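/- arXiv:1208.5530 — 6 statements merged into one kernel-verified Lean document; each statement's English description precedes it below -/
import Mathlib

section
/- Let A be a closed symmetric operator in a Hilbert space H and z a non-real complex number. If ψ lies in the deficiency subspace N_z = H ⊖ ran(A - z·I) and φ lies in N_{z̄} = H ⊖ ran(A - z̄·I), and φ - ψ belongs to the domain of A, then ‖φ‖ = ‖ψ‖. -/
/-!
Put `f := φ - ψ ∈ D(A)`. Orthogonality of `ψ` to `(A - z)D(A)` and of `φ` to `(A - z̄)D(A)` gives
`(ψ, Af) = z (ψ, f)` and `(φ, Af) = z̄ (φ, f)`, so `(f, Af)` is expressed through inner products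
of `φ` and `ψ` alone. Comparing it with its conjugate `(Af, f)`, which equals it by symmetry,
everything cancels except `(z - z̄)(‖φ‖² - ‖ψ‖²) = 0`.
-/

open ComplexConjugate

section Deficiency

variable {H : Type*} [NormedAddCommGroup H] [InnerProductSpace ℂ H] {D : Submodule ℂ H}

theorem inner_apply_eq_mul_inner_of_mem_orthogonal_range (A : D →ₗ[ℂ] H) {w : ℂ} {ψ : H}
    (hψ : ψ ∈ (LinearMap.range (A - w • D.subtype))ᗮ) (f : D) :
    inner ℂ ψ (A f) = w * inner ℂ ψ (f : H) := by
  have h := Submodule.inner_left_of_mem_orthogonal (LinearMap.mem_range_self _ f) hψ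
  simpa only [LinearMap.sub_apply, LinearMap.smul_apply, Submodule.coe_subtype, inner_sub_right,
    inner_smul_right, sub_eq_zero] using h

theorem sub_conj_mul_norm_sq_sub_eq_zero (A : D →ₗ[ℂ] H)
    (hsym : ∀ f g : D, (inner ℂ (A f) (g : H) : ℂ) = inner ℂ (f : H) (A g))
    {z : ℂ} {ψ φ : H}
    (hψ : ψ ∈ (LinearMap.range (A - z • D.subtype))ᗮ)
    (hφ : φ ∈ (LinearMap.range (A - conj z • D.subtype))ᗮ)
    (hdiff : φ - ψ ∈ D) :
    (z - conj z) * ((‖φ‖ : ℂ) ^ 2 - (‖ψ‖ : ℂ) ^ 2) = 0 := by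
  set f : D := ⟨φ - ψ, hdiff⟩
  have hAψ := inner_apply_eq_mul_inner_of_mem_orthogonal_range A hψ f
  have hAφ := inner_apply_eq_mul_inner_of_mem_orthogonal_range A hφ f
  have hright : inner ℂ (f : H) (A f) = conj z * inner ℂ φ (f : H) - z * inner ℂ ψ (f : H) := by
    change inner ℂ (φ - ψ) (A f) = _
    rw [inner_sub_left, hAφ, hAψ]
  have hself := hsym f f
  rw [← inner_conj_symm, hright] at hself
  simp only [f, map_sub, map_mul, map_pow, Complex.conj_conj, RCLike.conj_ofReal, inner_conj_symm,
    inner_sub_right, inner_self_eq_norm_sq_to_K] at hself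
  linear_combination hself

end Deficiency

theorem stmt4_general {H : Type*} [NormedAddCommGroup H] [InnerProductSpace ℂ H]
    (D : Submodule ℂ H) (A : D →ₗ[ℂ] H)
    (hsym : ∀ f g : D, (inner ℂ (A f) (g : H) : ℂ) = inner ℂ (f : H) (A g))
    (z : ℂ) (hz : z.im ≠ 0)
    (ψ φ : H)
    (hψ : ψ ∈ (LinearMap.range (A - z • D.subtype))ᗮ)
    (hφ : φ ∈ (LinearMap.range (A - (starRingEnd ℂ) z • D.subtype))ᗮ)
    (hdiff : φ - ψ ∈ D) :
    ‖φ‖ = ‖ψ‖ := by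
  have hz' : z - conj z ≠ 0 :=
    sub_ne_zero.mpr fun h => hz (Complex.conj_eq_iff_im.mp h.symm)
  have hsq : (‖φ‖ : ℂ) ^ 2 = (‖ψ‖ : ℂ) ^ 2 := sub_eq_zero.mp <|
    (mul_eq_zero.mp (sub_conj_mul_norm_sq_sub_eq_zero A hsym hψ hφ hdiff)).resolve_left hz'
  exact (sq_eq_sq₀ (norm_nonneg φ) (norm_nonneg ψ)).mp (by exact_mod_cast hsq)

/-- For a closed symmetric operator `A` and nonreal `z`, if `ψ ∈ N_z(A)`, `φ ∈ N_{z̄}(A)`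
and `φ - ψ ∈ D(A)`, then `‖φ‖ = ‖ψ‖`. -/
theorem stmt4 {H : Type*} [NormedAddCommGroup H] [InnerProductSpace ℂ H] [CompleteSpace H]
    (D : Submodule ℂ H) (A : D →ₗ[ℂ] H)
    (hsym : ∀ f g : D, (inner ℂ (A f) (g : H) : ℂ) = inner ℂ (f : H) (A g))
    (hclosed : IsClosed {p : H × H | ∃ f : D, p.1 = (f : H) ∧ p.2 = A f})
    (z : ℂ) (hz : z.im ≠ 0)
    (ψ φ : H)
    (hψ : ψ ∈ (LinearMap.range (A - z • D.subtype))ᗮ)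
    (hφ : φ ∈ (LinearMap.range (A - (starRingEnd ℂ) z • D.subtype))ᗮ)
    (hdiff : φ - ψ ∈ D) :
    ‖φ‖ = ‖ψ‖ :=
  stmt4_general D A hsym z hz ψ φ hψ hφ hdiff
end

section
/- Let W be a non-expanding operator in a Hilbert space H, having no non-zero fixed elements (Wg = g implies g = 0), and let z be a non-real complex number. Define B = z·I + (z - z̄)(W - I)⁻¹ on D(B) = (W - I)D(W). Then for every f = (W - I)g ∈ D(B), Im(Bf, f) = (Im z)·(‖Wg‖² - ‖g‖²); in particular, if Im z < 0 and ‖Wg‖ ≤ ‖g‖ for all g ∈ D(W), then B is dissipative. -/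
/-! Writing `f = u - v` with `u = Wg`, `v = g`, one has `z f + (z - z̄) v = z u - z̄ v`, so
`(f, z u - z̄ v) = z ‖u‖² + z̄ ‖v‖² - (z̄ (u, v) + z (v, u))`. The last bracket is a number plus
its conjugate, hence real, and the imaginary part is `Im z (‖u‖² - ‖v‖²)`. -/

open ComplexConjugate

theorem im_inner_sub_smul_sub_add_smul {H : Type*} [NormedAddCommGroup H]
    [InnerProductSpace ℂ H] (u v : H) (z : ℂ) :
    (inner ℂ (u - v) (z • (u - v) + (z - conj z) • v)).im = z.im * (‖u‖ ^ 2 - ‖v‖ ^ 2) := by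
  have hrearrange : z • (u - v) + (z - conj z) • v = z • u - conj z • v := by
    rw [smul_sub, sub_smul]; abel
  have hcross : (conj z * inner ℂ u v + z * inner ℂ v u).im = 0 := by
    rw [← inner_conj_symm u v, ← map_mul, add_comm, Complex.add_conj, Complex.ofReal_im]
  have hself (x : H) : inner ℂ x x = ((‖x‖ ^ 2 : ℝ) : ℂ) := by
    rw [inner_self_eq_norm_sq_to_K]; norm_cast
  rw [hrearrange, inner_sub_left, inner_sub_right, inner_sub_right, inner_smul_right,
    inner_smul_right, inner_smul_right, inner_smul_right, hself, hself]
  simp only [Complex.add_im, Complex.sub_im, Complex.mul_im, Complex.conj_im, Complex.conj_re,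
    Complex.ofReal_re, Complex.ofReal_im] at hcross ⊢
  linear_combination -hcross

theorem stmt9_general {H : Type*} [NormedAddCommGroup H] [InnerProductSpace ℂ H]
    (D : Submodule ℂ H) (W : D →ₗ[ℂ] H)
    (hW : ∀ g : D, ‖W g‖ ≤ ‖g‖)
    (z : ℂ) :
    ∀ g : D,
      (inner ℂ (W g - (g : H))
          (z • (W g - (g : H)) + (z - (starRingEnd ℂ) z) • (g : H)) : ℂ).im
        = z.im * (‖W g‖ ^ 2 - ‖(g : H)‖ ^ 2) ∧
      (z.im < 0 →
        0 ≤ (inner ℂ (W g - (g : H))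
            (z • (W g - (g : H)) + (z - (starRingEnd ℂ) z) • (g : H)) : ℂ).im) := by
  intro g
  have him := im_inner_sub_smul_sub_add_smul (W g) (g : H) z
  refine ⟨him, fun hz => him ▸ mul_nonneg_of_nonpos_of_nonpos hz.le <|
    sub_nonpos.mpr (pow_le_pow_left₀ (norm_nonneg _) (hW g) 2)⟩

/-- For a non-expanding `W` without non-zero fixed points and nonreal `z`, the operator
`B = z + (z - z̄)(W - 1)⁻¹` satisfies, for `f = (W-1)g`,
`Im(Bf, f) = (Im z)(‖Wg‖² - ‖g‖²)`; in particular `B` is dissipative when `Im z < 0`. -/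
theorem stmt9 {H : Type*} [NormedAddCommGroup H] [InnerProductSpace ℂ H]
    (D : Submodule ℂ H) (W : D →ₗ[ℂ] H)
    (hW : ∀ g : D, ‖W g‖ ≤ ‖g‖)
    (hfix : ∀ g : D, W g = (g : H) → g = 0)
    (z : ℂ) (hz : z.im ≠ 0) :
    ∀ g : D,
      (inner ℂ (W g - (g : H))
          (z • (W g - (g : H)) + (z - (starRingEnd ℂ) z) • (g : H)) : ℂ).im
        = z.im * (‖W g‖ ^ 2 - ‖(g : H)‖ ^ 2) ∧
      (z.im < 0 →
        0 ≤ (inner ℂ (W g - (g : H))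
            (z • (W g - (g : H)) + (z - (starRingEnd ℂ) z) • (g : H)) : ℂ).im) :=
  stmt9_general D W hW z
end

section
/- Let V be a closed isometric operator in a Hilbert space H and W a linear non-expanding operator in H with W ⊇ V (W extends V). Then W = V ⊕ T, where T = W restricted to D(W) ∩ (H ⊖ D(V)) is a linear non-expanding operator with domain contained in H ⊖ D(V) and range contained in H ⊖ ran(V); moreover D(W) = D(V) ⊕ D(T) (orthogonal direct sum of linear manifolds). -/
/-!
If a contraction `W` is isometric on a vector `g`, then the semidefinite form
`‖y‖² - ‖W y‖²` vanishes at `g`, so by the usual variational argument `W` preserves inner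
products with `g`: `⟪W g, W x⟫ = ⟪g, x⟫`. Hence `W` maps `D(W) ∩ D(V)ᗮ` into `(ran V)ᗮ`.
The decomposition `D(W) = D(V) ⊕ (D(V)ᗮ ∩ D(W))` is the orthogonal projection onto the
closed subspace `D(V)`.
-/

open RCLike ComplexConjugate

open scoped InnerProductSpace

section

variable {𝕜 : Type*} [RCLike 𝕜]

theorem RCLike.eq_zero_of_forall_re_mul_le (a : 𝕜) (C : ℝ)
    (h : ∀ t : 𝕜, re (t * a) ≤ ‖t‖ ^ 2 * C) : a = 0 := by
  by_contra ha
  have hpos : 0 < ‖a‖ ^ 2 := by positivity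
  -- test with `t = s • conj a` for a small real `s > 0`
  set s : ℝ := 1 / (|C| + 1) with hs
  have hs_pos : 0 < s := by positivity
  have hsC : s * C < 1 := by
    rw [hs, div_mul_eq_mul_div, one_mul, div_lt_one (by positivity)]
    linarith [le_abs_self C]
  have key := h ((s : 𝕜) * conj a)
  rw [mul_assoc, conj_mul, ← ofReal_pow, ← ofReal_mul, ofReal_re, norm_mul, norm_conj,
    norm_ofReal, abs_of_pos hs_pos] at key
  nlinarith [mul_lt_mul_of_pos_left hsC (mul_pos hs_pos hpos)]

variable {E F : Type*} [NormedAddCommGroup E] [InnerProductSpace 𝕜 E]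
  [NormedAddCommGroup F] [InnerProductSpace 𝕜 F]

theorem LinearMap.inner_map_map_of_norm_map_eq (W : E →ₗ[𝕜] F) (hW : ∀ y, ‖W y‖ ≤ ‖y‖)
    {g : E} (hg : ‖W g‖ = ‖g‖) (x : E) : ⟪W g, W x⟫_𝕜 = ⟪g, x⟫_𝕜 := by
  rw [← sub_eq_zero]
  refine RCLike.eq_zero_of_forall_re_mul_le _ (‖x‖ ^ 2) fun t => ?_
  have hcontr : ‖W (g + t • x)‖ ^ 2 ≤ ‖g + t • x‖ ^ 2 := by gcongr; exact hW _
  rw [map_add, map_smul, @norm_add_sq 𝕜, @norm_add_sq 𝕜, hg, inner_smul_right,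
    inner_smul_right, norm_smul, norm_smul] at hcontr
  have hWx : ‖t‖ ^ 2 * ‖W x‖ ^ 2 ≥ 0 := by positivity
  rw [mul_sub, map_sub]
  nlinarith

end

/-- A non-expanding extension `W` of a closed isometric operator `V` decomposes as
`W = V ⊕ T` with `T = W|_{D(W) ∩ (D(V))ᗮ}` mapping into `(ran V)ᗮ`, and
`D(W) = D(V) ⊕ D(T)`. -/
theorem stmt10 {H : Type*} [NormedAddCommGroup H] [InnerProductSpace ℂ H] [CompleteSpace H]
    (DV DW : Submodule ℂ H) (hDVclosed : IsClosed (DV : Set H)) (hle : DV ≤ DW)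
    (V : DV →ₗ[ℂ] H) (hViso : ∀ x : DV, ‖V x‖ = ‖x‖)
    (W : DW →ₗ[ℂ] H) (hWnon : ∀ x : DW, ‖W x‖ ≤ ‖x‖)
    (hext : ∀ x : DV, W ⟨(x : H), hle x.2⟩ = V x) :
    (∀ x : DW, (x : H) ∈ DVᗮ → W x ∈ (LinearMap.range V)ᗮ) ∧
      (∀ f : DW, ∃ f₁ f₂ : H, f₁ ∈ DV ∧ f₂ ∈ DVᗮ ∧ f₂ ∈ DW ∧ (f : H) = f₁ + f₂) := by
  constructor
  · rintro x hx _ ⟨g, rfl⟩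
    have hWg : ‖W ⟨g, hle g.2⟩‖ = ‖(⟨g, hle g.2⟩ : DW)‖ := by rw [hext, hViso]; rfl
    rw [← hext, W.inner_map_map_of_norm_map_eq hWnon hWg]
    exact hx g g.2
  · intro f
    have : CompleteSpace DV := hDVclosed.completeSpace_coe
    have hf : (f : H) ∈ DV ⊔ DVᗮ ⊓ DW := by
      rw [Submodule.sup_orthogonal_inf_of_hasOrthogonalProjection hle]; exact f.2
    obtain ⟨f₁, hf₁, f₂, ⟨hf₂, hf₂W⟩, hsum⟩ := Submodule.mem_sup.mp hf
    exact ⟨f₁, f₂, hf₁, hf₂, hf₂W, hsum.symm⟩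
end

section
/- Let H₁ and H₂ be subspaces of the same Hilbert dimension in a Hilbert space H. Then there exists an isometric linear operator V with domain H₁ and range H₂ that has no non-zero fixed points (Vh = h implies h = 0). -/
/-!
Start from any isometry `T` of `H₁` onto `H₂` and let `E ⊆ H₁` be its space of fixed vectors.
Composing `T` with the reflection of `H₁` in `Eᗮ` (that is, `-1` on `E` and `1` on `Eᗮ`) does not
change the range. If `x = a + b` (`a ∈ E`, `b ∈ Eᗮ`) were fixed by the new operator, then
`T b = 2a + b`, and Pythagoras with `‖T b‖ = ‖b‖` forces `a = 0`; then `b` is fixed by `T`,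
so `b ∈ E ∩ Eᗮ = 0`.
-/

open Submodule

theorem eq_zero_of_inner_eq_zero_of_norm_add_eq_norm {𝕜 E : Type*} [RCLike 𝕜]
    [NormedAddCommGroup E] [InnerProductSpace 𝕜 E] {a b : E} (h : inner 𝕜 a b = 0)
    (hn : ‖a + b‖ = ‖b‖) : a = 0 := by
  have := norm_add_sq_eq_norm_sq_add_norm_sq_of_inner_eq_zero a b h
  rw [hn] at this
  exact norm_eq_zero.1 (mul_self_eq_zero.1 (by linarith))

namespace LinearIsometry

variable {𝕜 H : Type*} [RCLike 𝕜] [NormedAddCommGroup H] [InnerProductSpace 𝕜 H]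
  {K : Submodule 𝕜 H}

def fixedSubspace (T : K →ₗᵢ[𝕜] H) : Submodule 𝕜 K :=
  LinearMap.eqLocus T.toLinearMap K.subtype

variable (T : K →ₗᵢ[𝕜] H)

theorem mem_fixedSubspace {x : K} : x ∈ T.fixedSubspace ↔ T x = x :=
  Iff.rfl

theorem isClosed_fixedSubspace : IsClosed (T.fixedSubspace : Set K) :=
  isClosed_eq T.continuous continuous_subtype_val

instance [CompleteSpace K] : CompleteSpace T.fixedSubspace :=
  T.isClosed_fixedSubspace.completeSpace_coe

theorem eq_zero_of_apply_reflection_eq_self [T.fixedSubspace.HasOrthogonalProjection] {x : K}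
    (hx : T (T.fixedSubspaceᗮ.reflection x) = x) : x = 0 := by
  set E := T.fixedSubspace
  set a := E.starProjection x
  set b := x - a
  have ha : a ∈ E := E.starProjection_apply_mem x
  have hb : b ∈ Eᗮ := E.sub_starProjection_mem_orthogonal x
  have hxab : x = a + b := (add_sub_cancel a x).symm
  have hTb : T b = ((2 : 𝕜) • a + b : K) := by
    rw [hxab, map_add, reflection_mem_subspace_orthogonal_precomplement_eq_neg ha,
      reflection_mem_subspace_eq_self hb, map_add, map_neg, (T.mem_fixedSubspace).1 ha] at hx
    push_cast at hx ⊢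
    linear_combination (norm := module) hx
  have ha0 : (2 : 𝕜) • a = 0 := by
    refine eq_zero_of_inner_eq_zero_of_norm_add_eq_norm (𝕜 := 𝕜) (b := b) ?_ ?_
    · rw [inner_smul_left, inner_right_of_mem_orthogonal ha hb, mul_zero]
    · rw [← T.norm_map b, hTb]
      rfl
  have ha0' : a = 0 := (smul_eq_zero.1 ha0).resolve_left two_ne_zero
  have hb0 : b = 0 := by
    refine disjoint_def.1 E.orthogonal_disjoint b ?_ hb
    rw [T.mem_fixedSubspace, hTb, ha0, zero_add]
  rw [hxab, ha0', hb0, add_zero]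

theorem exists_range_eq_and_eq_zero_of_apply_eq_self [CompleteSpace K] :
    ∃ V : K →ₗᵢ[𝕜] H, LinearMap.range V.toLinearMap = LinearMap.range T.toLinearMap ∧
      ∀ x, V x = x → x = 0 := by
  let R := T.fixedSubspaceᗮ.reflection
  refine ⟨T.comp R.toLinearIsometry, ?_, fun _ => T.eq_zero_of_apply_reflection_eq_self⟩
  exact LinearMap.range_comp_of_range_eq_top _ R.toLinearEquiv.range

end LinearIsometry

theorem stmt11_general {H : Type*} [NormedAddCommGroup H] [InnerProductSpace ℂ H] [CompleteSpace H]
    (H₁ H₂ : Submodule ℂ H) (hc1 : IsClosed (H₁ : Set H))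
    (hdim : Nonempty (H₁ ≃ₗᵢ[ℂ] H₂)) :
    ∃ V : H₁ →ₗ[ℂ] H, (∀ x : H₁, ‖V x‖ = ‖x‖) ∧ LinearMap.range V = H₂ ∧
      ∀ x : H₁, V x = (x : H) → x = 0 := by
  obtain ⟨W⟩ := hdim
  have : CompleteSpace H₁ := hc1.completeSpace_coe
  obtain ⟨V, hV, hfix⟩ :=
    (H₂.subtypeₗᵢ.comp W.toLinearIsometry).exists_range_eq_and_eq_zero_of_apply_eq_self
  refine ⟨V.toLinearMap, V.norm_map, ?_, hfix⟩
  rw [hV]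
  exact (LinearMap.range_comp_of_range_eq_top _ W.toLinearEquiv.range).trans H₂.range_subtype

/-- If `H₁` and `H₂` are closed subspaces of the same Hilbert dimension in a Hilbert
space, then there exists an isometric linear operator with domain `H₁` and range `H₂`
having no non-zero fixed points. -/
theorem stmt11 {H : Type*} [NormedAddCommGroup H] [InnerProductSpace ℂ H] [CompleteSpace H]
    (H₁ H₂ : Submodule ℂ H) (hc1 : IsClosed (H₁ : Set H)) (hc2 : IsClosed (H₂ : Set H))
    (hdim : Nonempty (H₁ ≃ₗᵢ[ℂ] H₂)) :
    ∃ V : H₁ →ₗ[ℂ] H, (∀ x : H₁, ‖V x‖ = ‖x‖) ∧ LinearMap.range V = H₂ ∧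
      ∀ x : H₁, V x = (x : H) → x = 0 :=
  stmt11_general H₁ H₂ hc1 hdim
end

section
/- Let V be a closed isometric operator in a Hilbert space H and ζ a point on the unit circle. Then for every f in the deficiency subspace N_ζ(V) = H ⊖ (I - ζV)D(V), one has V·P_{D(V)} f = ζ⁻¹·P_{ran V} f, where P_{D(V)} and P_{ran V} are the orthogonal projections onto D(V) and ran(V); consequently ‖P_{D(V)} f‖ = ‖P_{ran V} f‖ and ‖P_{H⊖D(V)} f‖ = ‖P_{H⊖ran V} f‖. -/
/-!
Let `u ∈ D(V)` with `V u = P_{ran V} f`. For `g ∈ D(V)`, orthogonality of `f` to `g - ζ V g` and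
the fact that `V` preserves inner products give
`⟪f, g⟫ = ζ ⟪f, V g⟫ = ζ ⟪V u, V g⟫ = ζ ⟪u, g⟫`,
so `conj ζ • u` is the orthogonal projection of `f` onto `D(V)`, and applying `V` gives the identity.
The norm identities follow since `V` is isometric and by Pythagoras.
-/

open scoped InnerProductSpace ComplexConjugate

namespace Submodule

variable {𝕜 E : Type*} [RCLike 𝕜] [NormedAddCommGroup E] [InnerProductSpace 𝕜 E]

theorem norm_sub_orthogonalProjectionOnto_eq_of_norm_eq {K L : Submodule 𝕜 E}
    [K.HasOrthogonalProjection] [L.HasOrthogonalProjection] {f : E}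
    (h : ‖(K.orthogonalProjectionOnto f : E)‖ = ‖(L.orthogonalProjectionOnto f : E)‖) :
    ‖f - K.orthogonalProjectionOnto f‖ = ‖f - L.orthogonalProjectionOnto f‖ := by
  have hK := norm_sq_eq_add_norm_sq_starProjection f K
  have hL := norm_sq_eq_add_norm_sq_starProjection f L
  rw [starProjection_orthogonal_val] at hK hL
  refine (sq_eq_sq₀ (norm_nonneg _) (norm_nonneg _)).1 ?_
  simp only [starProjection_apply] at hK hL
  rw [h] at hK
  linarith

variable {K : Submodule 𝕜 E} [K.HasOrthogonalProjection] {V : K →ₗ[𝕜] E}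
  [(LinearMap.range V).HasOrthogonalProjection] {ζ : 𝕜} {f : E}

theorem orthogonalProjectionOnto_eq_conj_smul_of_map_eq (hV : ∀ x, ‖V x‖ = ‖x‖)
    (hf : ∀ g : K, ⟪f, (g : E) - ζ • V g⟫_𝕜 = 0) {u : K}
    (hu : V u = (LinearMap.range V).orthogonalProjectionOnto f) :
    K.orthogonalProjectionOnto f = conj ζ • u := by
  refine Subtype.ext (K.eq_starProjection_of_mem_of_inner_eq_zero (K.smul_mem _ u.2) ?_)
  intro w hw
  have hfw : ⟪f, w⟫_𝕜 = ζ * ⟪f, V ⟨w, hw⟩⟫_𝕜 := by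
    simpa only [inner_sub_right, inner_smul_right, sub_eq_zero] using hf ⟨w, hw⟩
  have huw : ⟪(u : E), w⟫_𝕜 = ⟪V u, V ⟨w, hw⟩⟫_𝕜 :=
    ((LinearMap.norm_map_iff_inner_map_map V).1 hV u ⟨w, hw⟩).symm
  have hQ : ⟪f - V u, V ⟨w, hw⟩⟫_𝕜 = 0 := by
    rw [hu]
    exact (LinearMap.range V).starProjection_inner_eq_zero f _ ⟨_, rfl⟩
  rw [inner_sub_left, coe_smul, inner_smul_left, RCLike.conj_conj, hfw, huw, ← mul_sub, ← inner_sub_left,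
    hQ, mul_zero]

theorem map_orthogonalProjectionOnto_eq_conj_smul (hV : ∀ x, ‖V x‖ = ‖x‖)
    (hf : ∀ g : K, ⟪f, (g : E) - ζ • V g⟫_𝕜 = 0) :
    V (K.orthogonalProjectionOnto f)
      = conj ζ • ((LinearMap.range V).orthogonalProjectionOnto f : E) := by
  obtain ⟨u, hu⟩ := ((LinearMap.range V).orthogonalProjectionOnto f).2
  rw [orthogonalProjectionOnto_eq_conj_smul_of_map_eq hV hf hu, map_smul, hu]

end Submodule

theorem stmt13_general {H : Type*} [NormedAddCommGroup H] [InnerProductSpace ℂ H]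
    (DV : Submodule ℂ H) [CompleteSpace DV]
    (V : DV →ₗ[ℂ] H) (hViso : ∀ x : DV, ‖V x‖ = ‖x‖)
    [CompleteSpace (LinearMap.range V)]
    (ζ : ℂ) (hζ : ‖ζ‖ = 1)
    (f : H) (hf : ∀ g : DV, (inner ℂ f ((g : H) - ζ • V g) : ℂ) = 0) :
    V (Submodule.orthogonalProjectionOnto DV f)
        = ζ⁻¹ • (Submodule.orthogonalProjectionOnto (LinearMap.range V) f : H) ∧
      ‖(Submodule.orthogonalProjectionOnto DV f : H)‖
        = ‖(Submodule.orthogonalProjectionOnto (LinearMap.range V) f : H)‖ ∧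
      ‖f - (Submodule.orthogonalProjectionOnto DV f : H)‖
        = ‖f - (Submodule.orthogonalProjectionOnto (LinearMap.range V) f : H)‖ := by
  have hmap := Submodule.map_orthogonalProjectionOnto_eq_conj_smul hViso hf
  rw [← RCLike.inv_eq_conj hζ] at hmap
  have hnorm : ‖(DV.orthogonalProjectionOnto f : H)‖
      = ‖((LinearMap.range V).orthogonalProjectionOnto f : H)‖ := by
    rw [← Submodule.coe_norm, ← hViso, hmap, norm_smul, norm_inv, hζ, inv_one, one_mul]
  exact ⟨hmap, hnorm, Submodule.norm_sub_orthogonalProjectionOnto_eq_of_norm_eq hnorm⟩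

/-- For a closed isometric operator `V` and `|ζ| = 1`, every `f` in the deficiency
subspace `N_ζ(V) = (I - ζV)D(V))ᗮ` satisfies `V·P_{D(V)}f = ζ⁻¹·P_{ran V}f`; hence
`‖P_{D(V)}f‖ = ‖P_{ran V}f‖` and `‖P_{D(V)ᗮ}f‖ = ‖P_{(ran V)ᗮ}f‖`. -/
theorem stmt13 {H : Type*} [NormedAddCommGroup H] [InnerProductSpace ℂ H] [CompleteSpace H]
    (DV : Submodule ℂ H) [CompleteSpace DV]
    (V : DV →ₗ[ℂ] H) (hViso : ∀ x : DV, ‖V x‖ = ‖x‖)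
    [CompleteSpace (LinearMap.range V)]
    (ζ : ℂ) (hζ : ‖ζ‖ = 1)
    (f : H) (hf : ∀ g : DV, (inner ℂ f ((g : H) - ζ • V g) : ℂ) = 0) :
    V (Submodule.orthogonalProjectionOnto DV f)
        = ζ⁻¹ • (Submodule.orthogonalProjectionOnto (LinearMap.range V) f : H) ∧
      ‖(Submodule.orthogonalProjectionOnto DV f : H)‖
        = ‖(Submodule.orthogonalProjectionOnto (LinearMap.range V) f : H)‖ ∧
      ‖f - (Submodule.orthogonalProjectionOnto DV f : H)‖
        = ‖f - (Submodule.orthogonalProjectionOnto (LinearMap.range V) f : H)‖ :=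
  stmt13_general DV V hViso ζ hζ f hf
end

section
/- Let U be a unitary operator in a Hilbert space H̃ extending a closed isometric operator V in a subspace H ⊆ H̃, and define the generalized resolvent R_ζ = P_H (I - ζU)⁻¹|_H for |ζ| ≠ 1. Then for every h ∈ H and every ζ in the open unit disc, Re(R_ζ h, h) ≥ ½‖h‖²; and for ζ with |ζ| > 1, Re(R_ζ h, h) ≤ ½‖h‖². -/
/-!
With `h = x - ζ U x` and `‖U x‖ = ‖x‖`, expanding `‖h‖²` gives
`2 Re ⟪x, h⟫ = ‖h‖² + (1 - |ζ|²) ‖x‖²`, and `Re ⟪P_K x, h⟫ = Re ⟪x, h⟫` since `h ∈ K`.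
The sign of `1 - |ζ|²` decides on which side of `½‖h‖²` the real part lies.
-/

open RCLike
open scoped InnerProductSpace

section

variable {𝕜 E : Type*} [RCLike 𝕜] [NormedAddCommGroup E] [InnerProductSpace 𝕜 E]

theorem two_mul_re_inner_sub_smul (x y : E) (ζ : 𝕜) :
    2 * re ⟪x, x - ζ • y⟫_𝕜 = ‖x - ζ • y‖ ^ 2 + ‖x‖ ^ 2 - ‖ζ‖ ^ 2 * ‖y‖ ^ 2 := by
  rw [@norm_sub_sq 𝕜, inner_sub_right, map_sub, inner_self_eq_norm_sq, norm_smul, mul_pow]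
  ring

theorem LinearIsometry.two_mul_re_inner_sub_smul_self (U : E →ₗᵢ[𝕜] E) (x : E) (ζ : 𝕜) :
    2 * re ⟪x, x - ζ • U x⟫_𝕜 = ‖x - ζ • U x‖ ^ 2 + (1 - ‖ζ‖ ^ 2) * ‖x‖ ^ 2 := by
  rw [two_mul_re_inner_sub_smul, U.norm_map]
  ring

end

theorem stmt14_general {E : Type*} [NormedAddCommGroup E] [InnerProductSpace ℂ E]
    (K : Submodule ℂ E) [CompleteSpace K]
    (U : E ≃ₗᵢ[ℂ] E)
    (ζ : ℂ) (h : K) (x : E) (hx : x - ζ • U x = (h : E)) :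
    (‖ζ‖ < 1 →
      (1 / 2) * ‖(h : E)‖ ^ 2 ≤ (inner ℂ ((K.orthogonalProjection x : E)) (h : E) : ℂ).re) ∧
    (1 < ‖ζ‖ →
      (inner ℂ ((K.orthogonalProjection x : E)) (h : E) : ℂ).re ≤ (1 / 2) * ‖(h : E)‖ ^ 2) := by
  have key : 2 * (inner ℂ ((K.orthogonalProjection x : E)) (h : E) : ℂ).re
      = ‖(h : E)‖ ^ 2 + (1 - ‖ζ‖ ^ 2) * ‖x‖ ^ 2 := by
    have hproj : inner ℂ (K.orthogonalProjectionOnto x : E) (h : E) = inner ℂ x (h : E) :=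
      K.inner_orthogonalProjectionOnto_eq_of_mem_right h x
    rw [hproj, ← hx]
    exact U.toLinearIsometry.two_mul_re_inner_sub_smul_self x ζ
  constructor
  · intro hζ1
    have : 0 ≤ 1 - ‖ζ‖ ^ 2 := by nlinarith [norm_nonneg ζ]
    linarith [mul_nonneg this (sq_nonneg ‖x‖)]
  · intro hζ1
    have : 0 ≤ ‖ζ‖ ^ 2 - 1 := by nlinarith
    linarith [mul_nonneg this (sq_nonneg ‖x‖)]

/-- For the generalized resolvent `R_ζ = P_K (I - ζU)⁻¹|_K` of an isometric operator
(with `U` unitary on `E ⊇ K`): `Re(R_ζ h, h) ≥ ½‖h‖²` for `|ζ| < 1` and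
`Re(R_ζ h, h) ≤ ½‖h‖²` for `|ζ| > 1`. Here `x` solves `(I - ζU)x = h`. -/
theorem stmt14 {E : Type*} [NormedAddCommGroup E] [InnerProductSpace ℂ E] [CompleteSpace E]
    (K : Submodule ℂ E) [CompleteSpace K]
    (U : E ≃ₗᵢ[ℂ] E)
    (ζ : ℂ) (h : K) (x : E) (hx : x - ζ • U x = (h : E)) :
    (‖ζ‖ < 1 →
      (1 / 2) * ‖(h : E)‖ ^ 2 ≤ (inner ℂ ((K.orthogonalProjection x : E)) (h : E) : ℂ).re) ∧
    (1 < ‖ζ‖ →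
      (inner ℂ ((K.orthogonalProjection x : E)) (h : E) : ℂ).re ≤ (1 / 2) * ‖(h : E)‖ ^ 2) :=
  stmt14_general K U ζ h x hx
end
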